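/- arXiv:2205.05931 — 3 statements merged into one kernel-verified Lean document; each statement's English description precedes it below -/
import Mathlib

section
/- Let Δ(x) = θ(x) − x and suppose |Δ(x)| ≤ C√x (log x)² for x > X₀. Then for all sufficiently large x, log log θ(x) − log log x = Δ(x)/(x log x) + O((log x)³/x), i.e. |log log θ(x) − log log x − Δ(x)/(x log x)| ≤ C'·(log x)³/x for some constant C'. -/
/-! Writing `y = x (1 + δ)` and `log y = log x · (1 + u)` with `u = log (1 + δ) / log x`, the
difference `log log y - log log x` is `log (1 + u)`. Two applications of `log (1 + t) = t + O(t²)`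
(to `u`, then to `δ`) give `log log y - log log x = δ / log x + O(δ² / log x)`. Under the hypothesis
`|θ(x) - x| ≤ C √x (log x)²`, `δ = Δ(x) / x` satisfies `δ² ≤ C² (log x)⁴ / x`. -/

open Filter Real

/-- The first Chebyshev function θ(y) = ∑_{p ≤ y} log p. -/
noncomputable def chebTheta (y : ℝ) : ℝ :=
  ∑ p ∈ (Finset.range (⌊y⌋₊ + 1)).filter Nat.Prime, Real.log p

lemma abs_log_one_add_sub_self_le {t : ℝ} (ht : -(1 / 2) ≤ t) : |log (1 + t) - t| ≤ 2 * t ^ 2 := by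
  have hpos : 0 < 1 + t := by linarith
  have hupper : log (1 + t) ≤ t := by linarith [log_le_sub_one_of_pos hpos]
  have hlower : t / (1 + t) ≤ log (1 + t) := by
    have h := one_sub_inv_le_log_of_pos hpos
    rwa [show 1 - (1 + t)⁻¹ = t / (1 + t) by field_simp; ring] at h
  have hgap : t - 2 * t ^ 2 ≤ t / (1 + t) := by
    rw [le_div_iff₀ hpos]
    nlinarith [mul_nonneg (sq_nonneg t) (by linarith : (0 : ℝ) ≤ 1 + 2 * t)]
  rw [abs_of_nonpos (by linarith)]
  linarith

lemma abs_log_one_add_le {t : ℝ} (ht : |t| ≤ 1 / 2) : |log (1 + t)| ≤ 2 * |t| := by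
  have hlog := abs_log_one_add_sub_self_le (neg_le_of_abs_le ht)
  have ht2 : t ^ 2 ≤ |t| / 2 := by
    rw [← sq_abs]; nlinarith [abs_nonneg t]
  calc |log (1 + t)| = |t + (log (1 + t) - t)| := by ring_nf
    _ ≤ |t| + |log (1 + t) - t| := abs_add_le _ _
    _ ≤ 2 * |t| := by linarith

lemma abs_log_log_sub_log_log_sub_le {x y : ℝ} (hx : 0 < x) (hL : 1 ≤ log x)
    (hδ : |(y - x) / x| ≤ 1 / 4) :
    |log (log y) - log (log x) - (y - x) / (x * log x)| ≤ 10 * ((y - x) / x) ^ 2 / log x := by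
  set L := log x
  set δ := (y - x) / x
  have hL0 : 0 < L := by linarith
  have hy : y = x * (1 + δ) := by simp only [δ]; field_simp; ring
  have hδpos : 0 < 1 + δ := by linarith [neg_le_of_abs_le hδ]
  set u := log (1 + δ) / L
  have hu : |u| ≤ 2 * |δ| / L := by
    rw [abs_div, abs_of_pos hL0]
    gcongr
    exact abs_log_one_add_le (by linarith)
  have hu2 : u ^ 2 ≤ 4 * δ ^ 2 / L := by
    have hsq : u ^ 2 ≤ (2 * |δ| / L) ^ 2 := by
      rw [← sq_abs u]; exact pow_le_pow_left₀ (abs_nonneg u) hu 2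
    refine hsq.trans ?_
    rw [div_pow, mul_pow, sq_abs, div_le_div_iff₀ (by positivity) hL0]
    nlinarith [sq_nonneg δ, mul_nonneg (mul_nonneg (sq_nonneg δ) hL0.le) (sub_nonneg.2 hL)]
  have hu_half : |u| ≤ 1 / 2 := by
    refine hu.trans ?_
    rw [div_le_iff₀ hL0]
    linarith
  have hlog_y : log y = L * (1 + u) := by
    rw [hy, log_mul hx.ne' hδpos.ne', mul_one_add, mul_div_cancel₀ _ hL0.ne']
  have hloglog : log (log y) - log L = log (1 + u) := by
    rw [hlog_y, log_mul hL0.ne' (by linarith [neg_le_of_abs_le hu_half])]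
    ring
  have hsplit : log (log y) - log L - (y - x) / (x * L)
      = (log (1 + u) - u) + (log (1 + δ) - δ) / L := by
    rw [hloglog, ← div_div]
    ring
  have hδerr : |(log (1 + δ) - δ) / L| ≤ 2 * δ ^ 2 / L := by
    rw [abs_div, abs_of_pos hL0]
    gcongr
    exact abs_log_one_add_sub_self_le (by linarith [neg_le_of_abs_le hδ])
  calc |log (log y) - log L - (y - x) / (x * L)|
      ≤ |log (1 + u) - u| + |(log (1 + δ) - δ) / L| := hsplit ▸ abs_add_le _ _
    _ ≤ 2 * u ^ 2 + 2 * δ ^ 2 / L :=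
        add_le_add (abs_log_one_add_sub_self_le (by linarith [neg_le_of_abs_le hu_half])) hδerr
    _ ≤ 10 * δ ^ 2 / L := by
        have : 2 * u ^ 2 + 2 * δ ^ 2 / L ≤ 2 * (4 * δ ^ 2 / L) + 2 * δ ^ 2 / L := by linarith
        exact this.trans_eq (by ring)

lemma sq_sub_div_le_of_abs_sub_le {x y K : ℝ} (hx : 0 < x) (h : |y - x| ≤ K * √x) :
    ((y - x) / x) ^ 2 ≤ K ^ 2 / x := by
  have hsq : (y - x) ^ 2 ≤ (K * √x) ^ 2 := by
    rw [← sq_abs]; exact pow_le_pow_left₀ (abs_nonneg _) h 2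
  rw [mul_pow, sq_sqrt hx.le] at hsq
  rw [div_pow, div_le_div_iff₀ (by positivity) hx]
  nlinarith

theorem stmt_6_general (C X₀ : ℝ)
    (h : ∀ x : ℝ, X₀ < x → |chebTheta x - x| ≤ C * Real.sqrt x * (Real.log x) ^ 2) :
    ∃ C' X₁ : ℝ, 0 < C' ∧ ∀ x : ℝ, X₁ < x →
      |Real.log (Real.log (chebTheta x)) - Real.log (Real.log x)
          - (chebTheta x - x) / (x * Real.log x)|
        ≤ C' * (Real.log x) ^ 3 / x := by
  have hdecay : Tendsto (fun x => C ^ 2 * log x ^ 4 / x) atTop (nhds 0) := by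
    simpa [mul_div_assoc] using (tendsto_pow_log_div_mul_add_atTop 1 0 4 one_ne_zero).const_mul (C ^ 2)
  obtain ⟨X₁, hX₁⟩ := eventually_atTop.mp <| (eventually_gt_atTop X₀).and <|
    (eventually_ge_atTop (exp 1)).and <| hdecay.eventually (ge_mem_nhds (by norm_num : (0 : ℝ) < 1 / 16))
  refine ⟨10 * C ^ 2 + 1, X₁, by positivity, fun x hx => ?_⟩
  obtain ⟨hX₀, hexp, hsmall⟩ := hX₁ x hx.le
  have hx : 0 < x := (exp_pos 1).trans_le hexp
  have hL : 1 ≤ log x := (le_log_iff_exp_le hx).2 hexp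
  have hδ2 : ((chebTheta x - x) / x) ^ 2 ≤ C ^ 2 * log x ^ 4 / x := by
    have := sq_sub_div_le_of_abs_sub_le hx ((h x hX₀).trans_eq (by ring) : _ ≤ (C * log x ^ 2) * √x)
    exact this.trans_eq (by ring)
  have hδ : |(chebTheta x - x) / x| ≤ 1 / 4 :=
    abs_le_of_sq_le_sq (by linarith) (by norm_num)
  calc _ ≤ 10 * ((chebTheta x - x) / x) ^ 2 / log x := abs_log_log_sub_log_log_sub_le hx hL hδ
    _ ≤ 10 * (C ^ 2 * log x ^ 4 / x) / log x := by gcongr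
    _ = 10 * C ^ 2 * log x ^ 3 / x := by field_simp
    _ ≤ (10 * C ^ 2 + 1) * log x ^ 3 / x := by gcongr; linarith

/-- If Δ(x) = θ(x) − x satisfies |Δ(x)| ≤ C √x (log x)² for x > X₀, then for all
sufficiently large x, |log log θ(x) − log log x − Δ(x)/(x log x)| ≤ C'(log x)³/x. -/
theorem stmt_6 (C X₀ : ℝ) (hC : 0 < C)
    (h : ∀ x : ℝ, X₀ < x → |chebTheta x - x| ≤ C * Real.sqrt x * (Real.log x) ^ 2) :
    ∃ C' X₁ : ℝ, 0 < C' ∧ ∀ x : ℝ, X₁ < x →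
      |Real.log (Real.log (chebTheta x)) - Real.log (Real.log x)
          - (chebTheta x - x) / (x * Real.log x)|
        ≤ C' * (Real.log x) ^ 3 / x :=
  stmt_6_general C X₀ h
end

section
/- Suppose Φ(t) satisfies −(2/3 + 0.1)t^{3/2} ≤ Φ(t) ≤ (−2/3 + 0.1)t^{3/2} for all t > X₀. Let E(x) = ∫_x^∞ Φ(t)/(t³ log t)·(2 + 3/(log t) + 2/(log t)²) dt. Then −92/30 ≤ liminf_{x→∞} E(x)·√x·log x and limsup_{x→∞} E(x)·√x·log x ≤ −68/30. -/
/-!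
Write the integrand as `(Φ t * t ^ (-3/2)) * logKernel t` with
`logKernel t = t ^ (-3/2) * (2 / log t + 3 / log t ^ 2 + 2 / log t ^ 3)`. For large `t` the first
factor lies in `[-23/30, -17/30]`, so `E x` lies between these multiples of `∫_x^∞ logKernel`.
For `log t ≥ 2` the kernel is squeezed between the derivatives of
`t ^ (-1/2) * (-4 / log t + 2 / log t ^ 2)` and `-4 * t ^ (-1/2) / log t`, which gives
`4 - 2 / log x ≤ √x * log x * ∫_x^∞ logKernel ≤ 4`.
-/

open Filter Real MeasureTheory Set Topology

theorem le_liminf_and_limsup_le_of_squeeze {ι : Type*} {l : Filter ι} [l.NeBot] {f u v : ι → ℝ}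
    {α β : ℝ} (hu : Tendsto u l (𝓝 α)) (hv : Tendsto v l (𝓝 β))
    (huf : ∀ᶠ i in l, u i ≤ f i) (hfv : ∀ᶠ i in l, f i ≤ v i) :
    α ≤ liminf f l ∧ limsup f l ≤ β := by
  have hf_le : IsBoundedUnder (· ≤ ·) l f := hv.isBoundedUnder_le.mono_le hfv
  have hf_ge : IsBoundedUnder (· ≥ ·) l f := hu.isBoundedUnder_ge.mono_ge huf
  constructor
  · calc α = liminf u l := hu.liminf_eq.symm
      _ ≤ liminf f l := liminf_le_liminf huf hu.isBoundedUnder_ge hf_le.isCoboundedUnder_ge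
  · calc limsup f l ≤ limsup v l :=
          limsup_le_limsup hfv hf_ge.isCoboundedUnder_le hv.isBoundedUnder_le
      _ = β := hv.limsup_eq

lemma setIntegral_mul_mem_Icc {α : Type*} [MeasurableSpace α] {μ : Measure α} {s : Set α}
    (hs : MeasurableSet s) {r k : α → ℝ} {a b : ℝ} (hr : AEStronglyMeasurable r (μ.restrict s))
    (hk : IntegrableOn k s μ) (hk0 : ∀ t ∈ s, 0 ≤ k t) (hrab : ∀ t ∈ s, r t ∈ Icc a b) :
    a * ∫ t in s, k t ∂μ ≤ ∫ t in s, r t * k t ∂μ ∧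
      ∫ t in s, r t * k t ∂μ ≤ b * ∫ t in s, k t ∂μ := by
  have hrk : IntegrableOn (fun t ↦ r t * k t) s μ := by
    refine hk.bdd_mul hr (c := max |a| |b|) ((ae_restrict_iff' hs).2 (ae_of_all _ fun t ht ↦ ?_))
    exact abs_le_max_abs_abs (hrab t ht).1 (hrab t ht).2
  rw [← integral_const_mul, ← integral_const_mul]
  exact ⟨setIntegral_mono_on (hk.const_mul a) hrk hs fun t ht ↦
      mul_le_mul_of_nonneg_right (hrab t ht).1 (hk0 t ht),
    setIntegral_mono_on hrk (hk.const_mul b) hs fun t ht ↦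
      mul_le_mul_of_nonneg_right (hrab t ht).2 (hk0 t ht)⟩

lemma mul_rpow_neg_mem_Icc {f t p a b : ℝ} (ht : 0 < t) (ha : a * t ^ p ≤ f)
    (hb : f ≤ b * t ^ p) : f * t ^ (-p) ∈ Icc a b := by
  have hpos : 0 ≤ t ^ (-p) := (rpow_pos_of_pos ht _).le
  have hone : t ^ p * t ^ (-p) = 1 := by rw [← rpow_add ht, add_neg_cancel, rpow_zero]
  constructor
  · calc a = a * t ^ p * t ^ (-p) := by rw [mul_assoc, hone, mul_one]
      _ ≤ f * t ^ (-p) := mul_le_mul_of_nonneg_right ha hpos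
  · calc f * t ^ (-p) ≤ b * t ^ p * t ^ (-p) := mul_le_mul_of_nonneg_right hb hpos
      _ = b := by rw [mul_assoc, hone, mul_one]

lemma rpow_neg_one_half_eq_mul_rpow_neg_three_halves {t : ℝ} (ht : 0 < t) :
    t ^ (-(1 / 2) : ℝ) = t * t ^ (-(3 / 2) : ℝ) := by
  rw [← rpow_one_add' ht.le (by norm_num)]; norm_num

lemma rpow_neg_three_halves_mul_self {t : ℝ} (ht : 0 < t) :
    t ^ (-(3 / 2) : ℝ) * t ^ (-(3 / 2) : ℝ) = (t ^ 3)⁻¹ := by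
  rw [← rpow_add ht, ← rpow_natCast, ← rpow_neg ht.le]; norm_num

lemma hasDerivAt_rpow_neg_half_div_log {t : ℝ} (ht : 1 < t) :
    HasDerivAt (fun s ↦ -4 * s ^ (-(1 / 2) : ℝ) / log s)
      (t ^ (-(3 / 2) : ℝ) * (2 / log t + 4 / log t ^ 2)) t := by
  have ht0 : 0 < t := by linarith
  have hL : log t ≠ 0 := (log_pos ht).ne'
  refine (((hasDerivAt_rpow_const (p := -(1 / 2)) (Or.inl ht0.ne')).const_mul (-4)).div
    (hasDerivAt_log ht0.ne') hL).congr_deriv ?_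
  rw [show (-(1 / 2) - 1 : ℝ) = -(3 / 2) by norm_num,
    rpow_neg_one_half_eq_mul_rpow_neg_three_halves ht0]
  field_simp
  ring

lemma hasDerivAt_rpow_neg_half_mul_log_poly {t : ℝ} (ht : 1 < t) :
    HasDerivAt (fun s ↦ s ^ (-(1 / 2) : ℝ) * (-4 / log s + 2 / log s ^ 2))
      (t ^ (-(3 / 2) : ℝ) * (2 / log t + 3 / log t ^ 2 - 4 / log t ^ 3)) t := by
  have ht0 : 0 < t := by linarith
  have hL : log t ≠ 0 := (log_pos ht).ne'
  have hlog := hasDerivAt_log ht0.ne'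
  refine ((hasDerivAt_rpow_const (p := -(1 / 2)) (Or.inl ht0.ne')).mul
    (((hasDerivAt_const t (-4 : ℝ)).div hlog hL).add
      ((hasDerivAt_const t (2 : ℝ)).div (hlog.pow 2) (pow_ne_zero 2 hL)))).congr_deriv ?_
  rw [show (-(1 / 2) - 1 : ℝ) = -(3 / 2) by norm_num,
    rpow_neg_one_half_eq_mul_rpow_neg_three_halves ht0]
  simp only [Pi.add_apply, Pi.div_apply, Pi.pow_apply]
  field_simp
  ring

lemma tendsto_rpow_neg_half_atTop : Tendsto (fun s : ℝ ↦ s ^ (-(1 / 2) : ℝ)) atTop (𝓝 0) :=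
  tendsto_rpow_neg_atTop (by norm_num)

lemma tendsto_inv_log_atTop : Tendsto (fun s : ℝ ↦ (log s)⁻¹) atTop (𝓝 0) :=
  tendsto_log_atTop.inv_tendsto_atTop

lemma tendsto_rpow_neg_half_div_log :
    Tendsto (fun s ↦ -4 * s ^ (-(1 / 2) : ℝ) / log s) atTop (𝓝 0) := by
  simpa [div_eq_mul_inv] using
    (tendsto_rpow_neg_half_atTop.const_mul (-4)).mul tendsto_inv_log_atTop

lemma tendsto_rpow_neg_half_mul_log_poly :
    Tendsto (fun s ↦ s ^ (-(1 / 2) : ℝ) * (-4 / log s + 2 / log s ^ 2)) atTop (𝓝 0) := by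
  simpa [div_eq_mul_inv] using tendsto_rpow_neg_half_atTop.mul
    ((tendsto_inv_log_atTop.const_mul (-4)).add ((tendsto_inv_log_atTop.pow 2).const_mul 2))

lemma two_div_add_three_div_sq_sub_four_div_cube_nonneg {L : ℝ} (hL : 1 ≤ L) :
    0 ≤ 2 / L + 3 / L ^ 2 - 4 / L ^ 3 := by
  have : 2 / L + 3 / L ^ 2 - 4 / L ^ 3 = (2 * L ^ 2 + 3 * L - 4) / L ^ 3 := by
    field_simp
  rw [this]
  apply div_nonneg <;> nlinarith

noncomputable def logKernel (t : ℝ) : ℝ :=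
  t ^ (-(3 / 2) : ℝ) * (2 / log t + 3 / log t ^ 2 + 2 / log t ^ 3)

lemma measurable_logKernel : Measurable logKernel := by
  unfold logKernel; fun_prop

lemma logKernel_nonneg {t : ℝ} (ht : 1 < t) : 0 ≤ logKernel t := by
  have := log_pos ht
  exact mul_nonneg (rpow_nonneg (by linarith) _) (by positivity)

lemma le_logKernel {t : ℝ} (ht : 1 < t) :
    t ^ (-(3 / 2) : ℝ) * (2 / log t + 3 / log t ^ 2 - 4 / log t ^ 3) ≤ logKernel t := by
  have hL := log_pos ht
  refine mul_le_mul_of_nonneg_left ?_ (rpow_nonneg (by linarith) _)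
  have : 0 ≤ 4 / log t ^ 3 + 2 / log t ^ 3 := by positivity
  linarith

lemma logKernel_le {t : ℝ} (ht : exp 2 ≤ t) :
    logKernel t ≤ t ^ (-(3 / 2) : ℝ) * (2 / log t + 4 / log t ^ 2) := by
  have ht0 : 0 < t := (exp_pos 2).trans_le ht
  have hL : 2 ≤ log t := (le_log_iff_exp_le ht0).2 ht
  refine mul_le_mul_of_nonneg_left ?_ (rpow_nonneg ht0.le _)
  have : 2 / log t ^ 3 ≤ 1 / log t ^ 2 := by
    rw [div_le_div_iff₀ (by positivity) (by positivity)]; nlinarith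
  have : 3 / log t ^ 2 + 1 / log t ^ 2 = 4 / log t ^ 2 := by ring
  linarith

lemma integrableOn_logKernel {x : ℝ} (hx : exp 2 ≤ x) : IntegrableOn logKernel (Ioi x) := by
  have hx1 : 1 < x := (one_lt_exp_iff.2 two_pos).trans_le hx
  have hupper := integrableOn_Ioi_deriv_of_nonneg'
    (fun t ht ↦ hasDerivAt_rpow_neg_half_div_log (hx1.trans_le ht))
    (fun t ht ↦ (logKernel_nonneg (hx1.trans ht)).trans (logKernel_le (hx.trans ht.le)))
    tendsto_rpow_neg_half_div_log
  refine hupper.mono' measurable_logKernel.aestronglyMeasurable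
    ((ae_restrict_iff' measurableSet_Ioi).2 (ae_of_all _ fun t ht ↦ ?_))
  rw [norm_of_nonneg (logKernel_nonneg (hx1.trans ht))]
  exact logKernel_le (hx.trans ht.le)

lemma integral_logKernel_bounds {x : ℝ} (hx : exp 2 ≤ x) :
    x ^ (-(1 / 2) : ℝ) * (4 / log x - 2 / log x ^ 2) ≤ ∫ t in Ioi x, logKernel t ∧
      ∫ t in Ioi x, logKernel t ≤ 4 * x ^ (-(1 / 2) : ℝ) / log x := by
  have hx1 : 1 < x := (one_lt_exp_iff.2 two_pos).trans_le hx
  have hderiv_lower : ∀ t ∈ Ici x,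
      HasDerivAt (fun s ↦ s ^ (-(1 / 2) : ℝ) * (-4 / log s + 2 / log s ^ 2))
        (t ^ (-(3 / 2) : ℝ) * (2 / log t + 3 / log t ^ 2 - 4 / log t ^ 3)) t :=
    fun t ht ↦ hasDerivAt_rpow_neg_half_mul_log_poly (hx1.trans_le ht)
  have hderiv_upper : ∀ t ∈ Ici x, HasDerivAt (fun s ↦ -4 * s ^ (-(1 / 2) : ℝ) / log s)
      (t ^ (-(3 / 2) : ℝ) * (2 / log t + 4 / log t ^ 2)) t :=
    fun t ht ↦ hasDerivAt_rpow_neg_half_div_log (hx1.trans_le ht)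
  have hlower_nonneg : ∀ t ∈ Ioi x,
      0 ≤ t ^ (-(3 / 2) : ℝ) * (2 / log t + 3 / log t ^ 2 - 4 / log t ^ 3) := fun t ht ↦ by
    have ht0 : 0 < t := (exp_pos 2).trans (hx.trans_lt ht)
    have hL : 2 ≤ log t := (le_log_iff_exp_le ht0).2 (hx.trans ht.le)
    exact mul_nonneg (rpow_nonneg ht0.le _)
      (two_div_add_three_div_sq_sub_four_div_cube_nonneg (one_le_two.trans hL))
  have hupper_nonneg : ∀ t ∈ Ioi x, 0 ≤ t ^ (-(3 / 2) : ℝ) * (2 / log t + 4 / log t ^ 2) :=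
    fun t ht ↦ (logKernel_nonneg (hx1.trans ht)).trans (logKernel_le (hx.trans ht.le))
  constructor
  · calc x ^ (-(1 / 2) : ℝ) * (4 / log x - 2 / log x ^ 2)
        = ∫ t in Ioi x, t ^ (-(3 / 2) : ℝ) * (2 / log t + 3 / log t ^ 2 - 4 / log t ^ 3) := by
          rw [integral_Ioi_of_hasDerivAt_of_nonneg' hderiv_lower hlower_nonneg
            tendsto_rpow_neg_half_mul_log_poly]
          ring
      _ ≤ ∫ t in Ioi x, logKernel t :=
          setIntegral_mono_on
            (integrableOn_Ioi_deriv_of_nonneg' hderiv_lower hlower_nonneg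
              tendsto_rpow_neg_half_mul_log_poly)
            (integrableOn_logKernel hx) measurableSet_Ioi fun t ht ↦ le_logKernel (hx1.trans ht)
  · calc ∫ t in Ioi x, logKernel t
        ≤ ∫ t in Ioi x, t ^ (-(3 / 2) : ℝ) * (2 / log t + 4 / log t ^ 2) :=
          setIntegral_mono_on (integrableOn_logKernel hx)
            (integrableOn_Ioi_deriv_of_nonneg' hderiv_upper hupper_nonneg
              tendsto_rpow_neg_half_div_log)
            measurableSet_Ioi fun t ht ↦ logKernel_le (hx.trans ht.le)
      _ = 4 * x ^ (-(1 / 2) : ℝ) / log x := by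
          rw [integral_Ioi_of_hasDerivAt_of_nonneg' hderiv_upper hupper_nonneg
            tendsto_rpow_neg_half_div_log]
          ring

lemma integral_logKernel_mul_sqrt_mul_log_bounds {x : ℝ} (hx : exp 2 ≤ x) :
    4 - 2 / log x ≤ (∫ t in Ioi x, logKernel t) * √x * log x ∧
      (∫ t in Ioi x, logKernel t) * √x * log x ≤ 4 := by
  have hx0 : 0 < x := (exp_pos 2).trans_le hx
  have hL : 0 < log x := two_pos.trans_le ((le_log_iff_exp_le hx0).2 hx)
  have hsqrt : x ^ (-(1 / 2) : ℝ) * √x = 1 := by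
    rw [sqrt_eq_rpow, ← rpow_add hx0]; norm_num
  have hw : 0 ≤ √x * log x := by positivity
  obtain ⟨hlower, hupper⟩ := integral_logKernel_bounds hx
  rw [mul_assoc]
  constructor
  · calc 4 - 2 / log x = x ^ (-(1 / 2) : ℝ) * (4 / log x - 2 / log x ^ 2) * (√x * log x) := by
          field_simp
          linear_combination (2 - 4 * log x) * hsqrt
      _ ≤ _ := mul_le_mul_of_nonneg_right hlower hw
  · calc _ ≤ 4 * x ^ (-(1 / 2) : ℝ) / log x * (√x * log x) :=
          mul_le_mul_of_nonneg_right hupper hw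
      _ = 4 := by
          field_simp
          linear_combination hsqrt

lemma tendsto_integral_logKernel_mul_sqrt_mul_log :
    Tendsto (fun x ↦ (∫ t in Ioi x, logKernel t) * √x * log x) atTop (𝓝 4) := by
  have hlim : Tendsto (fun x ↦ 4 - 2 / log x) atTop (𝓝 4) := by
    simpa [div_eq_mul_inv] using (tendsto_inv_log_atTop.const_mul 2).const_sub 4
  have hbounds := eventually_ge_atTop (exp 2) |>.mono fun x hx ↦
    integral_logKernel_mul_sqrt_mul_log_bounds hx
  exact tendsto_of_tendsto_of_tendsto_of_le_of_le' hlim tendsto_const_nhds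
    (hbounds.mono fun _ h ↦ h.1) (hbounds.mono fun _ h ↦ h.2)

lemma div_mul_log_poly_eq_mul_logKernel (f : ℝ) {t : ℝ} (ht : 0 < t) :
    f / (t ^ 3 * log t) * (2 + 3 / log t + 2 / log t ^ 2) =
      f * t ^ (-(3 / 2) : ℝ) * logKernel t := by
  rw [logKernel]
  linear_combination (f * (2 / log t + 3 / log t ^ 2 + 2 / log t ^ 3)) *
    (rpow_neg_three_halves_mul_self ht).symm

lemma integral_Ici_mul_sqrt_mul_log_bounds {Φ : ℝ → ℝ} (hΦ : Measurable Φ) {a b x : ℝ}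
    (hx : exp 2 ≤ x) (ha : ∀ t, x < t → a * t ^ (3 / 2 : ℝ) ≤ Φ t)
    (hb : ∀ t, x < t → Φ t ≤ b * t ^ (3 / 2 : ℝ)) :
    a * ((∫ t in Ioi x, logKernel t) * √x * log x) ≤
        (∫ t in Ici x, Φ t / (t ^ 3 * log t) * (2 + 3 / log t + 2 / log t ^ 2)) * √x * log x ∧
      (∫ t in Ici x, Φ t / (t ^ 3 * log t) * (2 + 3 / log t + 2 / log t ^ 2)) * √x * log x ≤
        b * ((∫ t in Ioi x, logKernel t) * √x * log x) := by
  have hx0 : 0 < x := (exp_pos 2).trans_le hx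
  have hx1 : 1 < x := (one_lt_exp_iff.2 two_pos).trans_le hx
  have hw : 0 ≤ √x * log x := mul_nonneg (sqrt_nonneg x) (log_nonneg hx1.le)
  have heq : ∫ t in Ici x, Φ t / (t ^ 3 * log t) * (2 + 3 / log t + 2 / log t ^ 2) =
      ∫ t in Ioi x, Φ t * t ^ (-(3 / 2) : ℝ) * logKernel t := by
    rw [integral_Ici_eq_integral_Ioi]
    exact setIntegral_congr_fun measurableSet_Ioi fun t ht ↦
      div_mul_log_poly_eq_mul_logKernel (Φ t) (hx0.trans ht)
  obtain ⟨hla, hlb⟩ := setIntegral_mul_mem_Icc measurableSet_Ioi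
    (by fun_prop : Measurable fun t : ℝ ↦ Φ t * t ^ (-(3 / 2) : ℝ)).aestronglyMeasurable
    (integrableOn_logKernel hx) (fun t ht ↦ logKernel_nonneg (hx1.trans ht))
    (fun t ht ↦ mul_rpow_neg_mem_Icc (hx0.trans ht) (ha t ht) (hb t ht))
  rw [heq, mul_assoc _ √x, mul_assoc _ √x, ← mul_assoc a, ← mul_assoc b]
  exact ⟨mul_le_mul_of_nonneg_right hla hw, mul_le_mul_of_nonneg_right hlb hw⟩

/-- If −(2/3 + 0.1)t^(3/2) ≤ Φ(t) ≤ (−2/3 + 0.1)t^(3/2) for t > X₀, and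
E(x) = ∫_x^∞ Φ(t)/(t³ log t)·(2 + 3/log t + 2/(log t)²) dt, then
−92/30 ≤ liminf E(x)√x log x and limsup E(x)√x log x ≤ −68/30. -/
theorem stmt_9 (Φ : ℝ → ℝ) (hmeas : Measurable Φ) (X₀ : ℝ)
    (hlb : ∀ t : ℝ, X₀ < t → -(2 / 3 + 0.1) * t ^ ((3 : ℝ) / 2) ≤ Φ t)
    (hub : ∀ t : ℝ, X₀ < t → Φ t ≤ (-2 / 3 + 0.1) * t ^ ((3 : ℝ) / 2)) :
    (-92 / 30 : ℝ) ≤ Filter.liminf (fun x : ℝ =>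
        (∫ t in Set.Ici x, Φ t / (t ^ 3 * Real.log t)
            * (2 + 3 / Real.log t + 2 / (Real.log t) ^ 2))
          * Real.sqrt x * Real.log x) atTop ∧
    Filter.limsup (fun x : ℝ =>
        (∫ t in Set.Ici x, Φ t / (t ^ 3 * Real.log t)
            * (2 + 3 / Real.log t + 2 / (Real.log t) ^ 2))
          * Real.sqrt x * Real.log x) atTop ≤ -68 / 30 := by
  have hK := tendsto_integral_logKernel_mul_sqrt_mul_log
  have hbounds := eventually_ge_atTop (max X₀ (exp 2)) |>.mono fun x hx ↦
    integral_Ici_mul_sqrt_mul_log_bounds hmeas (le_of_max_le_right hx)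
      (fun t ht ↦ hlb t ((le_of_max_le_left hx).trans_lt ht))
      (fun t ht ↦ hub t ((le_of_max_le_left hx).trans_lt ht))
  have := le_liminf_and_limsup_le_of_squeeze (hK.const_mul _) (hK.const_mul _)
    (hbounds.mono fun _ h ↦ h.1) (hbounds.mono fun _ h ↦ h.2)
  norm_num at this ⊢
  exact this
end

section
/- Let p_j denote the j-th prime and θ_j = θ(p_j) = ∑_{i≤j} log p_i. Suppose |θ(x) − x| ≤ (1/(8π))·√x·(log x)² for all x > X₀. Then the series V_k = ∑_{j>k} |1/p_j − 1/θ_j| converges for every k, and V_k ≤ (1/(8π))·(1+δ_k)·∑_{j>k} (log p_j)²/(p_j^{3/2}) with δ_k → 0. -/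
/-!
Write |1/p − 1/θ(p)| = |θ(p) − p| / (p θ(p)) ≤ (p/θ(p)) · (1/(8π)) (log p)² / p^{3/2}.
The hypothesis forces θ(x)/x → 1, so the factor p/θ(p) tends to 1 along the primes, and the
majorant (log p)² / p^{3/2} = O(p^{-5/4}) is summable. Hence for every ε > 0 the tail V_k is
eventually at most (1 + ε)/(8π) times the tail S_k of the majorant, and one can take
δ_k = max(0, 8π V_k / S_k − 1).
-/

open Filter Real

open Asymptotics Topology

theorem isLittleO_log_sq_rpow_atTop {s : ℝ} (hs : 0 < s) :
    (fun x : ℝ => log x ^ 2) =o[atTop] fun x => x ^ s := by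
  simpa using isLittleO_log_rpow_rpow_atTop 2 hs

theorem tendsto_log_sq_div_sqrt_atTop :
    Tendsto (fun x : ℝ => log x ^ 2 / √x) atTop (𝓝 0) := by
  simpa only [sqrt_eq_rpow] using
    (isLittleO_log_sq_rpow_atTop one_half_pos).tendsto_div_nhds_zero

theorem isBigO_log_sq_div_rpow_atTop :
    (fun x : ℝ => log x ^ 2 / x ^ (3 / 2 : ℝ)) =O[atTop] fun x => x ^ (-5 / 4 : ℝ) := by
  have := (isLittleO_log_sq_rpow_atTop (s := 1 / 4) (by norm_num)).isBigO.mul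
    (isBigO_refl (fun x : ℝ => (x ^ (3 / 2 : ℝ))⁻¹) atTop)
  refine this.congr' (Eventually.of_forall fun x => (div_eq_mul_inv _ _).symm) ?_
  filter_upwards [eventually_gt_atTop 0] with x hx
  rw [← rpow_neg hx.le, ← rpow_add hx]
  norm_num

theorem summable_log_sq_div_rpow_three_halves :
    Summable fun n : ℕ => log n ^ 2 / (n : ℝ) ^ (3 / 2 : ℝ) :=
  summable_of_isBigO_nat' (Real.summable_nat_rpow.2 (by norm_num))
    (isBigO_log_sq_div_rpow_atTop.comp_tendsto tendsto_natCast_atTop_atTop)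

section Tails

variable {a g r : ℕ → ℝ}

theorem summable_of_eventually_le_mul (ha : ∀ j, 0 ≤ a j) (hg : Summable g) (hg0 : ∀ j, 0 ≤ g j)
    (hr : Tendsto r atTop (𝓝 1)) (hle : ∀ᶠ j in atTop, a j ≤ r j * g j) : Summable a := by
  refine (hg.mul_left 2).of_norm_bounded_eventually_nat ?_
  filter_upwards [hle, hr.eventually (ge_mem_nhds one_lt_two)] with j hj hrj
  rw [norm_of_nonneg (ha j)]
  exact hj.trans (mul_le_mul_of_nonneg_right hrj (hg0 j))

theorem eventually_tsum_tail_le (ha : Summable a) (hg : Summable g) (hg0 : ∀ j, 0 ≤ g j)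
    (hr : Tendsto r atTop (𝓝 1)) (hle : ∀ᶠ j in atTop, a j ≤ r j * g j) {ε : ℝ} (hε : 0 < ε) :
    ∀ᶠ k in atTop, ∑' j, a (k + j) ≤ (1 + ε) * ∑' j, g (k + j) := by
  obtain ⟨N, hN⟩ : ∃ N, ∀ j ≥ N, a j ≤ (1 + ε) * g j := eventually_atTop.1 <| by
    filter_upwards [hle, hr.eventually (ge_mem_nhds (lt_add_of_pos_right 1 hε))] with j hj hrj
    exact hj.trans (mul_le_mul_of_nonneg_right hrj (hg0 j))
  filter_upwards [eventually_ge_atTop N] with k hk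
  rw [← tsum_mul_left]
  exact Summable.tsum_le_tsum (fun j => hN _ (by omega))
    (ha.comp_injective (add_right_injective k))
    ((hg.comp_injective (add_right_injective k)).mul_left _)

theorem exists_tendsto_zero_le_one_add_mul {V S : ℕ → ℝ} (hS : ∀ k, 0 < S k)
    (h : ∀ ε > 0, ∀ᶠ k in atTop, V k ≤ (1 + ε) * S k) :
    ∃ δ : ℕ → ℝ, Tendsto δ atTop (𝓝 0) ∧ ∀ k, V k ≤ (1 + δ k) * S k := by
  refine ⟨fun k => max 0 (V k / S k - 1), tendsto_order.2 ⟨fun b hb => ?_, fun b hb => ?_⟩,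
    fun k => ?_⟩
  · exact Eventually.of_forall fun k => hb.trans_le (le_max_left _ _)
  · filter_upwards [h (b / 2) (half_pos hb)] with k hk
    refine max_lt hb ?_
    rw [sub_lt_iff_lt_add', div_lt_iff₀ (hS k)]
    nlinarith [hS k]
  · rw [← div_le_iff₀ (hS k)]
    linarith [le_max_right 0 (V k / S k - 1)]

theorem exists_tendsto_zero_tsum_tail_le (ha0 : ∀ j, 0 ≤ a j) (hg : Summable g)
    (hg_pos : ∀ j, 0 < g j) (hr : Tendsto r atTop (𝓝 1)) (hle : ∀ᶠ j in atTop, a j ≤ r j * g j) :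
    ∃ δ : ℕ → ℝ, Tendsto δ atTop (𝓝 0) ∧
      ∀ k, ∑' j, a (k + j) ≤ (1 + δ k) * ∑' j, g (k + j) := by
  have hg0 j := (hg_pos j).le
  refine exists_tendsto_zero_le_one_add_mul (fun k => ?_) fun ε hε => ?_
  · exact (hg.comp_injective (add_right_injective k)).tsum_pos (fun j => hg0 _) 0 (hg_pos _)
  · exact eventually_tsum_tail_le (summable_of_eventually_le_mul ha0 hg hg0 hr hle) hg hg0 hr hle hε

end Tails

section

variable {f : ℝ → ℝ} {c X₀ : ℝ}

theorem tendsto_div_self_of_abs_sub_le (hf : ∀ x, X₀ < x → |f x - x| ≤ c * √x * log x ^ 2) :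
    Tendsto (fun x => f x / x) atTop (𝓝 1) := by
  rw [← tendsto_sub_nhds_zero_iff]
  refine squeeze_zero_norm' ?_ (by simpa using tendsto_log_sq_div_sqrt_atTop.const_mul c)
  filter_upwards [eventually_gt_atTop X₀, eventually_gt_atTop 0] with x hX hx
  have hss : √x * √x = x := mul_self_sqrt hx.le
  calc ‖f x / x - 1‖ = |f x - x| / x := by
        rw [norm_eq_abs, div_sub_one hx.ne', abs_div, abs_of_pos hx]
    _ ≤ c * √x * log x ^ 2 / x := by gcongr; exact hf x hX
    _ = c * (log x ^ 2 / √x) := by field_simp; linear_combination c * log x ^ 2 * hss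

theorem abs_one_div_sub_one_div_le (hf : ∀ x, X₀ < x → |f x - x| ≤ c * √x * log x ^ 2) {x : ℝ}
    (hX : X₀ < x) (hx : 0 < x) (hfx : 0 < f x) :
    |1 / x - 1 / f x| ≤ x / f x * (c * (log x ^ 2 / x ^ (3 / 2 : ℝ))) := by
  have hss : √x * √x = x := mul_self_sqrt hx.le
  have hx32 : x ^ (3 / 2 : ℝ) = x * √x := by
    rw [show (3 / 2 : ℝ) = 1 + 1 / 2 by norm_num, rpow_add hx, rpow_one, ← sqrt_eq_rpow]
  calc |1 / x - 1 / f x| = |f x - x| / (x * f x) := by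
        rw [div_sub_div _ _ hx.ne' hfx.ne', abs_div, abs_of_pos (mul_pos hx hfx), one_mul, mul_one]
    _ ≤ c * √x * log x ^ 2 / (x * f x) := by gcongr; exact hf x hX
    _ = x / f x * (c * (log x ^ 2 / x ^ (3 / 2 : ℝ))) := by
        rw [hx32]; field_simp; linear_combination c * log x ^ 2 * hss

theorem eventually_abs_one_div_sub_one_div_le
    (hf : ∀ x, X₀ < x → |f x - x| ≤ c * √x * log x ^ 2) :
    ∀ᶠ x in atTop, |1 / x - 1 / f x| ≤ x / f x * (c * (log x ^ 2 / x ^ (3 / 2 : ℝ))) := by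
  filter_upwards [eventually_gt_atTop X₀, eventually_gt_atTop 0,
    (tendsto_div_self_of_abs_sub_le hf).eventually (lt_mem_nhds one_pos)] with x hX hx hfx
  exact abs_one_div_sub_one_div_le hf hX hx
    (by simpa [hx] using (div_pos_iff_of_pos_right hx).1 hfx)

end

theorem tendsto_nth_prime_atTop : Tendsto (fun j => (Nat.nth Nat.Prime j : ℝ)) atTop atTop :=
  tendsto_natCast_atTop_atTop.comp (Nat.nth_strictMono Nat.infinite_setOfPred_prime).tendsto_atTop

/-- Let p_j be the j-th prime and θ_j = θ(p_j). If |θ(x) − x| ≤ (1/(8π))√x(log x)²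
for x > X₀, then V_k = ∑_{j>k}|1/p_j − 1/θ_j| converges and
V_k ≤ (1/(8π))(1+δ_k)·∑_{j>k}(log p_j)²/p_j^(3/2) with δ_k → 0. -/
theorem stmt_11 (X₀ : ℝ)
    (h : ∀ x : ℝ, X₀ < x →
      |chebTheta x - x| ≤ (1 / (8 * Real.pi)) * Real.sqrt x * (Real.log x) ^ 2) :
    (Summable fun j : ℕ =>
        |1 / ((Nat.nth Nat.Prime j : ℝ))
          - 1 / chebTheta (Nat.nth Nat.Prime j)|) ∧
    ∃ δ : ℕ → ℝ, Tendsto δ atTop (nhds 0) ∧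
      ∀ k : ℕ,
        (∑' j : ℕ, |1 / ((Nat.nth Nat.Prime (k + 1 + j) : ℝ))
            - 1 / chebTheta (Nat.nth Nat.Prime (k + 1 + j))|)
          ≤ (1 / (8 * Real.pi)) * (1 + δ k)
            * ∑' j : ℕ, (Real.log (Nat.nth Nat.Prime (k + 1 + j))) ^ 2
                / ((Nat.nth Nat.Prime (k + 1 + j) : ℝ)) ^ ((3 : ℝ) / 2) := by
  set c := 1 / (8 * π)
  set p : ℕ → ℝ := fun j => (Nat.nth Nat.Prime j : ℝ)
  set g : ℕ → ℝ := fun j => c * (log (p j) ^ 2 / p j ^ (3 / 2 : ℝ))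
  have hp := tendsto_nth_prime_atTop
  have hr : Tendsto (fun j => p j / chebTheta (p j)) atTop (𝓝 1) := by
    simpa using ((tendsto_div_self_of_abs_sub_le h).comp hp).inv₀ one_ne_zero
  have hle := hp.eventually (eventually_abs_one_div_sub_one_div_le h)
  have hg : Summable g :=
    (summable_log_sq_div_rpow_three_halves.comp_injective
      (Nat.nth_injective Nat.infinite_setOfPred_prime)).mul_left c
  have hg_pos j : 0 < g j := by
    have hp2 : (2 : ℝ) ≤ p j := Nat.ofNat_le_cast.2 (Nat.prime_nth_prime j).two_le
    have : 0 < log (p j) := log_pos (by linarith)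
    positivity
  have ha0 j : 0 ≤ |1 / p j - 1 / chebTheta (p j)| := abs_nonneg _
  obtain ⟨δ, hδ, hV⟩ := exists_tendsto_zero_tsum_tail_le ha0 hg hg_pos hr hle
  refine ⟨summable_of_eventually_le_mul ha0 hg (fun j => (hg_pos j).le) hr hle,
    fun k => δ (k + 1), hδ.comp (tendsto_add_atTop_nat 1), fun k => ?_⟩
  calc _ ≤ (1 + δ (k + 1)) * ∑' j, g (k + 1 + j) := hV (k + 1)
    _ = _ := by rw [tsum_mul_left]; ring
end
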